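/- Under Assumption (A), fix θ ∈ ℝ^d and define A_1 = {(x_1,…,x_n) ∈ (ℝ^d)^n : ‖θ̂(x_1,…,x_n) − θ‖ ≤ m/(12L)} and A_2 = {(x_1,…,x_n) : ‖n^{-1}Σ_{j=1}^n V''(x_j − θ) − 𝓘‖ ≤ m/4} (operator norm), and A = A_1 ∩ A_2. Then the map A ∋ (x_1,…,x_n) ↦ θ̂(x_1,…,x_n) is Lipschitz with constant 4M/(m√n): for all (x_1,…,x_n), (x̃_1,…,x̃_n) ∈ A, ‖θ̂(x_1,…,x_n) − θ̂(x̃_1,…,x̃_n)‖ ≤ (4M/(m√n))·(Σ_{j=1}^n ‖x_j − x̃_j‖²)^{1/2}. -/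

import Mathlib

open MeasureTheory Real
open scoped RealInnerProductSpace BigOperators ENNReal NNReal

noncomputable section

abbrev Euc (d : ℕ) : Type := EuclideanSpace ℝ (Fin d)

/-- The noise distribution with density `e^{-V(x)}` w.r.t. Lebesgue measure. -/
def noiseMeasure {d : ℕ} (V : Euc d → ℝ) : Measure (Euc d) :=
  MeasureTheory.volume.withDensity fun x => ENNReal.ofReal (Real.exp (-(V x)))

/-- The joint distribution of an i.i.d. sample `X_1, …, X_n` from `P_θ(dx) = e^{-V(x-θ)}dx`. -/
def sampleMeasure {d : ℕ} (V : Euc d → ℝ) (n : ℕ) (θ : Euc d) : Measure (Fin n → Euc d) :=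
  Measure.pi fun _ => (noiseMeasure V).map (fun x => θ + x)

/-- `ψ_α`-norm of a random variable: `sup_{p ≥ 1} p^{-1/α} (E|η|^p)^{1/p}`. -/
def psiNorm {Ω : Type*} [MeasurableSpace Ω] (α : ℝ) (μ : Measure Ω) (η : Ω → ℝ) : ℝ :=
  ⨆ p : {p : ℝ // 1 ≤ p}, (p : ℝ) ^ (-(1 / α)) * (∫ ω, |η ω| ^ (p : ℝ) ∂μ) ^ ((1 : ℝ) / (p : ℝ))

/-- `f` belongs to the Hölder ball of radius `B` in `C^s`, `s = l + ρ`. -/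
def holderCLe {d : ℕ} (l : ℕ) (ρ : ℝ) (f : Euc d → ℝ) (B : ℝ) : Prop :=
  ContDiff ℝ l f ∧
  (∀ j : ℕ, j ≤ l → ∀ x, ‖iteratedFDeriv ℝ j f x‖ ≤ B) ∧
  (∀ x y, ‖iteratedFDeriv ℝ l f x - iteratedFDeriv ℝ l f y‖ ≤ B * ‖x - y‖ ^ ρ)

/-- The operator `(T g)(θ) = E_θ g(θ̂)`. -/
def Texp {d : ℕ} (V : Euc d → ℝ) (n : ℕ) (hatθ : (Fin n → Euc d) → Euc d) (g : Euc d → ℝ) :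
    Euc d → ℝ :=
  fun θ => ∫ x, g (hatθ x) ∂ sampleMeasure V n θ

/-- The operator `𝓑 = 𝓣 - Id`. -/
def Bop {d : ℕ} (V : Euc d → ℝ) (n : ℕ) (hatθ : (Fin n → Euc d) → Euc d) :
    (Euc d → ℝ) → Euc d → ℝ :=
  fun g θ => Texp V n hatθ g θ - g θ

/-- The bias-corrected functional `f_k = Σ_{j=0}^k (-1)^j 𝓑^j f`. -/
def biasCorrect {d : ℕ} (V : Euc d → ℝ) (n : ℕ) (hatθ : (Fin n → Euc d) → Euc d) (k : ℕ)
    (f : Euc d → ℝ) : Euc d → ℝ :=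
  fun θ => ∑ j ∈ Finset.range (k + 1), (-1 : ℝ) ^ j * (Bop V n hatθ)^[j] f θ

/-- The Poincaré constant `c(V)` of the distribution `e^{-V(x)}dx`. -/
def poincareConst {d : ℕ} (V : Euc d → ℝ) : ℝ :=
  sInf {C : ℝ | 0 ≤ C ∧ ∀ g : Euc d → ℝ, LocallyLipschitz g →
    ∫ x, (g x - ∫ y, g y ∂ noiseMeasure V) ^ 2 ∂ noiseMeasure V ≤
      C * ∫ x, ‖gradient g x‖ ^ 2 ∂ noiseMeasure V}

/-!
Along the segment between `θ̂(x')` and `θ̂(x)` every point lies within `m/(12L)` of `θ`, so by the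
Lipschitz bound on `V''` the empirical Hessian `∑ⱼ V''(xⱼ - w)` loses at most `n m/12` against
its value at `θ`, which is at least `n · 3m/4` by the condition on `A₂`. Hence the gradient of the
empirical risk of `x` increases by at least `n (2m/3) ‖θ̂(x) - θ̂(x')‖²` in the direction
`θ̂(x) - θ̂(x')`. It vanishes at `θ̂(x)`, and at `θ̂(x')` it differs from the vanishing gradient of
the risk of `x'` by at most `M ∑ⱼ ‖xⱼ - x'ⱼ‖ ≤ M √n (∑ⱼ ‖xⱼ - x'ⱼ‖²)^{1/2}`.
-/

open Set

lemma le_div_mul_sqrt_sum_sq_of_card_mul_le {ι : Type*} [Fintype ι] [Nonempty ι] {κ M t : ℝ}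
    (hκ : 0 < κ) (hM : 0 ≤ M) {s : ι → ℝ} (h : Fintype.card ι * κ * t ≤ M * ∑ j, s j) :
    t ≤ M / (κ * √(Fintype.card ι)) * √(∑ j, s j ^ 2) := by
  set N : ℝ := (Fintype.card ι : ℝ)
  have hN : 0 < √N := Real.sqrt_pos.2 (Nat.cast_pos.2 Fintype.card_pos)
  have hCS : ∑ j, s j ≤ √N * √(∑ j, s j ^ 2) := by
    simpa [N] using Real.sum_mul_le_sqrt_mul_sqrt Finset.univ (fun _ => 1) s
  have hscaled : √N * (κ * √N * t) ≤ √N * (M * √(∑ j, s j ^ 2)) :=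
    calc √N * (κ * √N * t) = N * κ * t := by
          linear_combination κ * t * Real.mul_self_sqrt (Nat.cast_nonneg (Fintype.card ι))
      _ ≤ M * ∑ j, s j := h
      _ ≤ M * (√N * √(∑ j, s j ^ 2)) := by gcongr
      _ = √N * (M * √(∑ j, s j ^ 2)) := by ring
  rw [div_mul_eq_mul_div, le_div_iff₀ (by positivity)]
  linarith [le_of_mul_le_mul_left hscaled hN]

section

variable {E ι : Type*} [NormedAddCommGroup E] [NormedSpace ℝ E] [Fintype ι]

lemma ContinuousMultilinearMap.apply_vecCons_self_le_add
    (f g : ContinuousMultilinearMap ℝ (fun _ : Fin 2 => E) ℝ) (u : E) :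
    f ![u, u] ≤ g ![u, u] + ‖f - g‖ * ‖u‖ ^ 2 := by
  have h := (f - g).le_opNorm_mul_pow_card_of_le (m := ![u, u]) (b := ‖u‖)
    (by simp [pi_norm_le_iff_of_nonneg])
  rw [Fintype.card_fin, Real.norm_eq_abs, sub_apply] at h
  linarith [le_abs_self (f ![u, u] - g ![u, u])]

lemma norm_fderiv_sub_le_of_norm_iteratedFDeriv_two_le {V : E → ℝ} (hV : ContDiff ℝ 2 V)
    {M : ℝ} (hM : ∀ p, ‖iteratedFDeriv ℝ 2 V p‖ ≤ M) (y z : E) :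
    ‖fderiv ℝ V y - fderiv ℝ V z‖ ≤ M * ‖y - z‖ := by
  have hd : Differentiable ℝ (fderiv ℝ V) :=
    (hV.fderiv_right (m := 1) le_rfl).differentiable one_ne_zero
  refine convex_univ.norm_image_sub_le_of_norm_fderiv_le (fun p _ => hd p) (fun p _ => ?_)
    (mem_univ z) (mem_univ y)
  rw [← norm_iteratedFDeriv_one, norm_iteratedFDeriv_fderiv]
  exact hM p

lemma le_sub_apply_sub_of_forall_mem_segment {G : E → E →L[ℝ] ℝ}
    {G' : E → E →L[ℝ] E →L[ℝ] ℝ} (hG : ∀ w, HasFDerivAt G (G' w) w) {a b : E} {c : ℝ}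
    (hc : ∀ w ∈ segment ℝ a b, c ≤ G' w (b - a) (b - a)) :
    c ≤ (G b - G a) (b - a) := by
  set φ : ℝ → ℝ := fun t => G (a + t • (b - a)) (b - a)
  have hφ : ∀ t, HasDerivAt φ (G' (a + t • (b - a)) (b - a) (b - a)) t := by
    intro t
    have hγ : HasDerivAt (fun t : ℝ => a + t • (b - a)) (b - a) t := by
      simpa using ((hasDerivAt_id t).smul_const (b - a)).const_add a
    exact (ContinuousLinearMap.apply ℝ ℝ (b - a)).hasFDerivAt.comp_hasDerivAt t
      ((hG _).comp_hasDerivAt t hγ)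
  have hφd : Differentiable ℝ φ := fun t => (hφ t).differentiableAt
  have key := (convex_Icc (0 : ℝ) 1).mul_sub_le_image_sub_of_le_deriv
    hφd.continuous.continuousOn hφd.differentiableOn (C := c) (fun t ht => ?_)
    0 (by simp) 1 (by simp) zero_le_one
  · simpa [φ] using key
  · rw [(hφ t).deriv]
    exact hc _ (segment_eq_image' ℝ a b ▸ ⟨t, interior_subset ht, rfl⟩)

def empiricalRisk (V : E → ℝ) (x : ι → E) (θ : E) : ℝ :=
  ∑ j, V (x j - θ)

lemma hasFDerivAt_empiricalRisk {V : E → ℝ} (hV : Differentiable ℝ V) (x : ι → E) (θ : E) :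
    HasFDerivAt (empiricalRisk V x) (-∑ j, fderiv ℝ V (x j - θ)) θ := by
  rw [← Finset.sum_neg_distrib]
  refine HasFDerivAt.fun_sum fun j _ => ?_
  simpa [Function.comp_def] using
    (hV (x j - θ)).hasFDerivAt.comp θ ((hasFDerivAt_id θ).const_sub (x j))

lemma fderiv_empiricalRisk {V : E → ℝ} (hV : Differentiable ℝ V) (x : ι → E) :
    fderiv ℝ (empiricalRisk V x) = fun θ => -∑ j, fderiv ℝ V (x j - θ) :=
  funext fun θ => (hasFDerivAt_empiricalRisk hV x θ).fderiv

lemma hasFDerivAt_fderiv_empiricalRisk {V : E → ℝ} (hV : ContDiff ℝ 2 V) (x : ι → E) (θ : E) :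
    HasFDerivAt (fderiv ℝ (empiricalRisk V x)) (∑ j, fderiv ℝ (fderiv ℝ V) (x j - θ)) θ := by
  have hd : Differentiable ℝ (fderiv ℝ V) :=
    (hV.fderiv_right (m := 1) le_rfl).differentiable one_ne_zero
  rw [fderiv_empiricalRisk (hV.differentiable two_ne_zero), ← neg_neg (∑ j, _),
    ← Finset.sum_neg_distrib]
  refine (HasFDerivAt.fun_sum fun j _ => ?_).neg
  simpa [Function.comp_def] using
    (hd (x j - θ)).hasFDerivAt.comp θ ((hasFDerivAt_id θ).const_sub (x j))

lemma fderiv_empiricalRisk_eq_zero_of_isMin {V : E → ℝ} {x : ι → E} {a : E}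
    (ha : ∀ θ, empiricalRisk V x a ≤ empiricalRisk V x θ) :
    fderiv ℝ (empiricalRisk V x) a = 0 :=
  IsLocalMin.fderiv_eq_zero (Filter.Eventually.of_forall ha)

lemma norm_fderiv_empiricalRisk_sub_le {V : E → ℝ} (hV : ContDiff ℝ 2 V) {M : ℝ}
    (hM : ∀ p, ‖iteratedFDeriv ℝ 2 V p‖ ≤ M) (x x' : ι → E) (θ : E) :
    ‖fderiv ℝ (empiricalRisk V x') θ - fderiv ℝ (empiricalRisk V x) θ‖ ≤
      M * ∑ j, ‖x j - x' j‖ := by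
  have hd := hV.differentiable two_ne_zero
  rw [fderiv_empiricalRisk hd x, fderiv_empiricalRisk hd x', neg_sub_neg,
    ← Finset.sum_sub_distrib, Finset.mul_sum]
  refine (norm_sum_le _ _).trans (Finset.sum_le_sum fun j _ => ?_)
  simpa using norm_fderiv_sub_le_of_norm_iteratedFDeriv_two_le hV hM (x j - θ) (x' j - θ)

lemma card_mul_sq_le_sum_iteratedFDeriv_two_apply [Nonempty ι] {V : E → ℝ} {L m δ r : ℝ}
    (hL : 0 ≤ L)
    (hLip : ∀ p q, ‖iteratedFDeriv ℝ 2 V p - iteratedFDeriv ℝ 2 V q‖ ≤ L * ‖p - q‖)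
    {I : ContinuousMultilinearMap ℝ (fun _ : Fin 2 => E) ℝ} (hI : ∀ u, m * ‖u‖ ^ 2 ≤ I ![u, u])
    {x : ι → E} {θ w : E}
    (hA : ‖(Fintype.card ι : ℝ)⁻¹ • ∑ j, iteratedFDeriv ℝ 2 V (x j - θ) - I‖ ≤ δ)
    (hw : ‖w - θ‖ ≤ r) (u : E) :
    Fintype.card ι * (m - δ - L * r) * ‖u‖ ^ 2 ≤
      ∑ j, iteratedFDeriv ℝ 2 V (x j - w) ![u, u] := by
  set N : ℝ := (Fintype.card ι : ℝ)
  set S := ∑ j, iteratedFDeriv ℝ 2 V (x j - θ) ![u, u]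
  have hN : 0 < N := Nat.cast_pos.2 Fintype.card_pos
  have hθ : N * (m - δ) * ‖u‖ ^ 2 ≤ S := by
    have h := I.apply_vecCons_self_le_add (N⁻¹ • ∑ j, iteratedFDeriv ℝ 2 V (x j - θ)) u
    rw [norm_sub_rev] at h
    simp only [smul_apply, _root_.sum_apply, smul_eq_mul] at h
    have hmean : (m - δ) * ‖u‖ ^ 2 ≤ N⁻¹ * S := by
      nlinarith [hI u, mul_le_mul_of_nonneg_right hA (sq_nonneg ‖u‖)]
    calc N * (m - δ) * ‖u‖ ^ 2 = N * ((m - δ) * ‖u‖ ^ 2) := by ring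
      _ ≤ N * (N⁻¹ * S) := by gcongr
      _ = S := by field_simp
  have hterm : ∀ j, iteratedFDeriv ℝ 2 V (x j - θ) ![u, u] - L * r * ‖u‖ ^ 2 ≤
      iteratedFDeriv ℝ 2 V (x j - w) ![u, u] := by
    intro j
    have h := (iteratedFDeriv ℝ 2 V (x j - θ)).apply_vecCons_self_le_add
      (iteratedFDeriv ℝ 2 V (x j - w)) u
    have hlip : ‖iteratedFDeriv ℝ 2 V (x j - θ) - iteratedFDeriv ℝ 2 V (x j - w)‖ ≤ L * r := by
      refine (hLip _ _).trans ?_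
      rw [sub_sub_sub_cancel_left]
      gcongr
    nlinarith [mul_le_mul_of_nonneg_right hlip (sq_nonneg ‖u‖)]
  calc N * (m - δ - L * r) * ‖u‖ ^ 2 ≤ ∑ j, (iteratedFDeriv ℝ 2 V (x j - θ) ![u, u]
        - L * r * ‖u‖ ^ 2) := by
        rw [Finset.sum_sub_distrib, Finset.sum_const, Finset.card_univ, nsmul_eq_mul]
        linarith
    _ ≤ _ := Finset.sum_le_sum fun j _ => hterm j

lemma mul_norm_sub_le_of_isMin_empiricalRisk {V : E → ℝ} (hV : ContDiff ℝ 2 V) {M : ℝ}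
    (hM : ∀ p, ‖iteratedFDeriv ℝ 2 V p‖ ≤ M) {x x' : ι → E} {a b : E}
    (ha : ∀ θ, empiricalRisk V x a ≤ empiricalRisk V x θ)
    (hb : ∀ θ, empiricalRisk V x' b ≤ empiricalRisk V x' θ) {κ : ℝ}
    (hκ : ∀ w ∈ segment ℝ b a,
      κ * ‖a - b‖ ^ 2 ≤ ∑ j, iteratedFDeriv ℝ 2 V (x j - w) ![a - b, a - b]) :
    κ * ‖a - b‖ ≤ M * ∑ j, ‖x j - x' j‖ := by
  have hmono : κ * ‖a - b‖ ^ 2 ≤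
      (fderiv ℝ (empiricalRisk V x) a - fderiv ℝ (empiricalRisk V x) b) (a - b) :=
    le_sub_apply_sub_of_forall_mem_segment (hasFDerivAt_fderiv_empiricalRisk hV x)
      fun w hw => by simpa [iteratedFDeriv_two_apply] using hκ w hw
  rw [fderiv_empiricalRisk_eq_zero_of_isMin ha,
    ← fderiv_empiricalRisk_eq_zero_of_isMin hb] at hmono
  have hbound := (le_abs_self _).trans <|
    ((fderiv ℝ (empiricalRisk V x') b - fderiv ℝ (empiricalRisk V x) b).le_opNorm (a - b)).trans
      (mul_le_mul_of_nonneg_right (norm_fderiv_empiricalRisk_sub_le hV hM x x' b)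
        (norm_nonneg _))
  rcases (norm_nonneg (a - b)).eq_or_lt with h0 | hpos
  · rw [← h0, mul_zero]
    exact mul_nonneg ((norm_nonneg _).trans (hM 0))
      (Finset.sum_nonneg fun j _ => norm_nonneg _)
  · nlinarith

end

/-- Proposition 4.3 / `Lip_basic`: the MLE is Lipschitz with constant
`4M/(m√n)` on the set `A = A₁ ∩ A₂`. -/
theorem stmt_14 :
    ∀ (L M m : ℝ),
      0 < L → 0 < M → 0 < m →
      ∀ (d n : ℕ) (V : Euc d → ℝ) (hatθ : (Fin n → Euc d) → Euc d),
        0 < n →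
        StrictConvexOn ℝ Set.univ V →
        ContDiff ℝ 2 V →
        (∫ x, Real.exp (-(V x)) = 1) →
        (∀ x, ‖iteratedFDeriv ℝ 2 V x‖ ≤ M) →
        (∀ x y, ‖iteratedFDeriv ℝ 2 V x - iteratedFDeriv ℝ 2 V y‖ ≤ L * ‖x - y‖) →
        -- `𝓘 = E[V''(ξ)] ⪰ m I_d`
        (∀ u : Euc d,
          m * ‖u‖ ^ 2 ≤ (∫ y, iteratedFDeriv ℝ 2 V y ∂ noiseMeasure V) ![u, u]) →
        (∀ (x : Fin n → Euc d) (θ' : Euc d),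
          ∑ j, V (x j - hatθ x) ≤ ∑ j, V (x j - θ')) →
        ∀ (θ : Euc d) (x x' : Fin n → Euc d),
          -- `x ∈ A = A₁ ∩ A₂`
          ‖hatθ x - θ‖ ≤ m / (12 * L) →
          ‖(n : ℝ)⁻¹ • ∑ j, iteratedFDeriv ℝ 2 V (x j - θ) -
              ∫ y, iteratedFDeriv ℝ 2 V y ∂ noiseMeasure V‖ ≤ m / 4 →
          -- `x' ∈ A = A₁ ∩ A₂`
          ‖hatθ x' - θ‖ ≤ m / (12 * L) →
          ‖(n : ℝ)⁻¹ • ∑ j, iteratedFDeriv ℝ 2 V (x' j - θ) -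
              ∫ y, iteratedFDeriv ℝ 2 V y ∂ noiseMeasure V‖ ≤ m / 4 →
          ‖hatθ x - hatθ x'‖ ≤
            4 * M / (m * Real.sqrt n) * Real.sqrt (∑ j, ‖x j - x' j‖ ^ 2) := by
  intro L M m hL hM hm d n V hatθ hn _ hV _ hMV hLV hI hmin θ x x' hx₁ hx₂ hx'₁ _
  have : NeZero n := ⟨hn.ne'⟩
  have hLm : L * (m / (12 * L)) = m / 12 := by field_simp
  have hcurv : ∀ w ∈ segment ℝ (hatθ x') (hatθ x), n * (m - m / 4 - m / 12) *
      ‖hatθ x - hatθ x'‖ ^ 2 ≤ ∑ j, iteratedFDeriv ℝ 2 V (x j - w)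
        ![hatθ x - hatθ x', hatθ x - hatθ x'] := by
    intro w hw
    have hwθ : ‖w - θ‖ ≤ m / (12 * L) := by
      simpa [dist_eq_norm] using (convex_closedBall θ _).segment_subset
        (by simpa [dist_eq_norm] using hx'₁) (by simpa [dist_eq_norm] using hx₁) hw
    simpa only [Fintype.card_fin, hLm] using card_mul_sq_le_sum_iteratedFDeriv_two_apply (x := x)
      hL.le hLV hI (by simpa only [Fintype.card_fin] using hx₂) hwθ (hatθ x - hatθ x')
  have hstab := mul_norm_sub_le_of_isMin_empiricalRisk (x := x) (x' := x') hV hMV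
    (hmin x) (hmin x') hcurv
  calc ‖hatθ x - hatθ x'‖
      ≤ M / ((m - m / 4 - m / 12) * √n) * √(∑ j, ‖x j - x' j‖ ^ 2) := by
        simpa only [Fintype.card_fin] using le_div_mul_sqrt_sum_sq_of_card_mul_le
          (s := fun j => ‖x j - x' j‖) (by linarith) hM.le
          (by simpa only [Fintype.card_fin] using hstab)
    _ ≤ 4 * M / (m * √n) * √(∑ j, ‖x j - x' j‖ ^ 2) := by
        rw [show 4 * M / (m * √n) = M / (m / 4 * √n) by field_simp]
        have hsqrt : 0 < √(n : ℝ) := Real.sqrt_pos.2 (Nat.cast_pos.2 hn)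
        gcongr
        linarith
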